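/- Theorem 4.2(c). Let c > 0 and let {(P_1^{(j)},…,P_m^{(j)})}_{j≥0} be a sequence of tuples of orthonormal matrices satisfying the sufficient-ascent condition of the context. Then for every 1 ≤ ℓ ≤ m the following two series converge: (i) Σ_{j=0}^∞ σ_min(ℋ_ℓ^{(j)}) · ‖P_ℓ^{(j)} − Π_ℓ^{(j)} P_ℓ^{(j)}‖_F² < ∞, where Π_ℓ^{(j)} ∈ ℂ^{n_ℓ×n_ℓ} is the matrix of the orthogonal projection of ℂ^{n_ℓ} onto the column space of ℋ_ℓ^{(j)} (when rank(ℋ_ℓ^{(j)}) = k_ℓ this quantity equals ‖sin Θ(R(ℋ_ℓ^{(j)}), R(P_ℓ^{(j)}))‖_F², the squared Frobenius norm of the sines of the canonical angles between the column spaces); and (ii) Σ_{j=0}^∞ σ_min(ℋ_ℓ^{(j)}) · ‖ℋ_ℓ^{(j)} − P_ℓ^{(j)}·((P_ℓ^{(j)})^H ℋ_ℓ^{(j)})‖_F² / ‖ℋ_ℓ^{(j)}‖_F² < ∞, where a summand is taken to be 0 whenever ℋ_ℓ^{(j)} = 0. -/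

import Mathlib

open Matrix Filter Topology
open scoped ComplexOrder Classical

/-- The entries of the multi-mode product `B ×₁ P₁ᴴ ×₂ ⋯ ×ₘ Pₘᴴ` of an `m`-mode tensor
`B` of size `n 0 × ⋯ × n (m-1)` with the conjugate transposes of the matrices `P ℓ`.
The column index set of `P ℓ` is `(s : Fin t) × Fin (κ ℓ s)`, encoding the partition of
`k ℓ = Σ s, κ ℓ s` into `t` blocks (block `s` has the indices with first component `s`). -/
noncomputable def multiProd {m t : ℕ} {n : Fin m → ℕ} {κ : Fin m → Fin t → ℕ}
    (B : (∀ ℓ, Fin (n ℓ)) → ℂ)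
    (P : ∀ ℓ, Matrix (Fin (n ℓ)) ((s : Fin t) × Fin (κ ℓ s)) ℂ) :
    (∀ ℓ, (s : Fin t) × Fin (κ ℓ s)) → ℂ :=
  fun i => ∑ j : ∀ ℓ, Fin (n ℓ), (∏ ℓ, star (P ℓ (j ℓ) (i ℓ))) * B j

/-- The block-diagonal objective
`f(P₁,…,Pₘ) = ‖BDiag(B ×₁ P₁ᴴ ×₂ ⋯ ×ₘ Pₘᴴ)‖_F²`: the sum of `|T(i)|²` over all
multi-indices `i` whose components all lie in the same diagonal block. -/
noncomputable def fObj {m t : ℕ} {n : Fin m → ℕ} {κ : Fin m → Fin t → ℕ}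
    (B : (∀ ℓ, Fin (n ℓ)) → ℂ)
    (P : ∀ ℓ, Matrix (Fin (n ℓ)) ((s : Fin t) × Fin (κ ℓ s)) ℂ) : ℝ :=
  ∑ i : ∀ ℓ, (s : Fin t) × Fin (κ ℓ s),
    if ∃ s : Fin t, ∀ ℓ, (i ℓ).1 = s then Complex.normSq (multiProd B P i) else 0

/-- The tensor `B_{ℓ,s} = B ×₁ P_{1s}ᴴ ⋯ ×_{ℓ-1} P_{ℓ-1,s}ᴴ ×_{ℓ+1} P_{ℓ+1,s}ᴴ ⋯ ×ₘ P_{ms}ᴴ`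
(mode products by the `s`-th column blocks over every mode except `ℓ`), evaluated at the index
whose `ℓ`-th component is `a` and whose other components are given by `ih`. -/
noncomputable def Bls {m t : ℕ} {n : Fin m → ℕ} {κ : Fin m → Fin t → ℕ}
    (B : (∀ ℓ, Fin (n ℓ)) → ℂ)
    (P : ∀ ℓ, Matrix (Fin (n ℓ)) ((s : Fin t) × Fin (κ ℓ s)) ℂ)
    (ℓ : Fin m) (s : Fin t) (a : Fin (n ℓ))
    (ih : ∀ r : {r : Fin m // r ≠ ℓ}, Fin (κ r.1 s)) : ℂ :=
  ∑ j : ∀ r, Fin (n r),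
    if j ℓ = a then (∏ r : {r : Fin m // r ≠ ℓ}, star (P r.1 (j r.1) ⟨s, ih r⟩)) * B j else 0

/-- The matrix `H_{ℓs}(P₁,…,Pₘ) ∈ ℂ^{n_ℓ×n_ℓ}` with `(a,b)`-entry
`Σ_î B_{ℓ,s}(î[ℓ↦a])·conj(B_{ℓ,s}(î[ℓ↦b]))`, summed over multi-indices `î` with the
`ℓ`-th coordinate ignored. -/
noncomputable def Hmat {m t : ℕ} {n : Fin m → ℕ} {κ : Fin m → Fin t → ℕ}
    (B : (∀ ℓ, Fin (n ℓ)) → ℂ)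
    (P : ∀ ℓ, Matrix (Fin (n ℓ)) ((s : Fin t) × Fin (κ ℓ s)) ℂ)
    (ℓ : Fin m) (s : Fin t) : Matrix (Fin (n ℓ)) (Fin (n ℓ)) ℂ :=
  Matrix.of fun a b =>
    ∑ ih : ∀ r : {r : Fin m // r ≠ ℓ}, Fin (κ r.1 s),
      Bls B P ℓ s a ih * star (Bls B P ℓ s b ih)

/-- The partial Euclidean gradient `ℋ_ℓ(P₁,…,Pₘ) ∈ ℂ^{n_ℓ×k_ℓ}` of `fObj` with respect to
`P ℓ` (for the real inner product `⟨X,Y⟩ = Re tr(Yᴴ X)`): its `s`-th column block is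
`2 · H_{ℓs}(P₁,…,Pₘ) · P_{ℓs}`. -/
noncomputable def scrH {m t : ℕ} {n : Fin m → ℕ} {κ : Fin m → Fin t → ℕ}
    (B : (∀ ℓ, Fin (n ℓ)) → ℂ)
    (P : ∀ ℓ, Matrix (Fin (n ℓ)) ((s : Fin t) × Fin (κ ℓ s)) ℂ)
    (ℓ : Fin m) : Matrix (Fin (n ℓ)) ((s : Fin t) × Fin (κ ℓ s)) ℂ :=
  Matrix.of fun a sc => 2 * ∑ b, Hmat B P ℓ sc.1 a b * P ℓ b sc

/-- The trace norm (nuclear norm) of a complex matrix: the sum of all its singular values,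
computed as the sum of the square roots of the eigenvalues of `Hᴴ * H`. -/
noncomputable def traceNorm {α β : Type*} [Fintype α] [Fintype β] [DecidableEq β]
    (H : Matrix α β ℂ) : ℝ :=
  ∑ i, Real.sqrt ((Matrix.posSemidef_conjTranspose_mul_self H).1.eigenvalues i)

/-- The Frobenius norm of a complex matrix. -/
noncomputable def frobNorm {α β : Type*} [Fintype α] [Fintype β] (X : Matrix α β ℂ) : ℝ :=
  Real.sqrt (∑ a, ∑ b, Complex.normSq (X a b))

/-- The smallest singular value of a (tall, `card β ≤ card α`) complex matrix `H`:
the square root of the smallest eigenvalue of `Hᴴ * H`. -/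
noncomputable def sigmaMin {α β : Type*} [Fintype α] [Fintype β] [DecidableEq β]
    (H : Matrix α β ℂ) : ℝ :=
  sInf (Set.range fun i =>
    Real.sqrt ((Matrix.posSemidef_conjTranspose_mul_self H).1.eigenvalues i))

/-!
Expand everything in an orthonormal eigenbasis `vᵢ` of `ℋᴴℋ` (right singular vectors, with
`σᵢ = ‖ℋ vᵢ‖`). Then `‖ℋ‖_tr − Re tr(Pᴴℋ) = Σᵢ (σᵢ − Re⟪P vᵢ, ℋ vᵢ⟫)` with nonnegative terms,
and both squared Frobenius norms are sums over `i` of `‖(·) vᵢ‖²`. For an orthogonal projection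
`T` fixing `u`, `|⟪u, x⟫|² + ‖u‖²‖x − T x‖² ≤ ‖u‖²‖x‖²`; with `T = Π`, `u = ℋ vᵢ`, `x = P vᵢ`
for (i), and `T = P Pᴴ`, `u = P vᵢ`, `x = ℋ vᵢ` for (ii), together with `σ_min ≤ σᵢ` this bounds
each summand by twice the residual `‖ℋ‖_tr − Re tr(Pᴴℋ)` (times `‖ℋ‖_F²` in (ii)). The residuals
are summable: by sufficient ascent their partial sums are at most `(sup f − f(P⁽⁰⁾)) / c`, and `f`
is bounded on tuples of orthonormal matrices.
-/

theorem mul_sq_sub_sq_le {s σ a : ℝ} (hs : 0 ≤ s) (hsσ : s ≤ σ) (haσ : a ≤ σ) :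
    s * (σ ^ 2 - a ^ 2) ≤ 2 * σ ^ 2 * (σ - a) := by
  have hσa : 0 ≤ σ - a := sub_nonneg.2 haσ
  calc s * (σ ^ 2 - a ^ 2) = s * (σ + a) * (σ - a) := by ring
    _ ≤ s * (2 * σ) * (σ - a) := by gcongr; linarith
    _ ≤ σ * (2 * σ) * (σ - a) := by gcongr; linarith
    _ = 2 * σ ^ 2 * (σ - a) := by ring

theorem mul_le_two_mul_sub_of_sq_mul_le {s σ a e : ℝ} (hs : 0 ≤ s) (hsσ : s ≤ σ) (haσ : a ≤ σ)
    (he : σ ^ 2 * e ≤ σ ^ 2 - a ^ 2) : s * e ≤ 2 * (σ - a) := by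
  rcases (hs.trans hsσ).eq_or_lt with hσ | hσ
  · obtain rfl : s = 0 := by linarith
    simpa using haσ
  · refine le_of_mul_le_mul_left ?_ (pow_pos hσ 2)
    calc σ ^ 2 * (s * e) = s * (σ ^ 2 * e) := by ring
      _ ≤ s * (σ ^ 2 - a ^ 2) := by gcongr
      _ ≤ 2 * σ ^ 2 * (σ - a) := mul_sq_sub_sq_le hs hsσ haσ
      _ = σ ^ 2 * (2 * (σ - a)) := by ring

theorem mul_le_two_mul_sub_mul_of_le_sq_sub_sq {s σ a e F : ℝ} (hs : 0 ≤ s) (hsσ : s ≤ σ)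
    (haσ : a ≤ σ) (he : e ≤ σ ^ 2 - a ^ 2) (hF : σ ^ 2 ≤ F) :
    s * e ≤ 2 * (σ - a) * F :=
  calc s * e ≤ s * (σ ^ 2 - a ^ 2) := by gcongr
    _ ≤ 2 * σ ^ 2 * (σ - a) := mul_sq_sub_sq_le hs hsσ haσ
    _ ≤ 2 * F * (σ - a) := by gcongr
    _ = 2 * (σ - a) * F := by ring

section InnerProductSpace

variable {𝕜 E : Type*} [RCLike 𝕜] [NormedAddCommGroup E] [InnerProductSpace 𝕜 E]

theorem norm_inner_le_of_norm_eq_one {x : E} (hx : ‖x‖ = 1) (y : E) :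
    ‖(inner 𝕜 x y : 𝕜)‖ ≤ ‖y‖ := by
  simpa [hx] using norm_inner_le_norm (𝕜 := 𝕜) x y

namespace LinearMap.IsSymmetricProjection

variable {T : E →ₗ[𝕜] E}

theorem norm_sq_eq_norm_apply_sq_add (hT : T.IsSymmetricProjection) (x : E) :
    ‖x‖ ^ 2 = ‖T x‖ ^ 2 + ‖x - T x‖ ^ 2 := by
  have horth : inner 𝕜 (T x) (x - T x) = 0 := by
    rw [inner_sub_right, ← hT.isSymmetric, ← Module.End.mul_apply, hT.isIdempotentElem.eq,
      sub_self]
  simpa [sq] using norm_add_sq_eq_norm_sq_add_norm_sq_of_inner_eq_zero _ _ horth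

theorem norm_inner_sq_add_sq_mul_norm_sub_sq_le (hT : T.IsSymmetricProjection) {u : E}
    (hu : T u = u) (x : E) :
    ‖(inner 𝕜 u x : 𝕜)‖ ^ 2 + ‖u‖ ^ 2 * ‖x - T x‖ ^ 2 ≤ ‖u‖ ^ 2 * ‖x‖ ^ 2 := by
  have hux : ‖(inner 𝕜 u x : 𝕜)‖ ≤ ‖u‖ * ‖T x‖ := by
    rw [← hu, hT.isSymmetric, hu]
    exact norm_inner_le_norm _ _
  rw [hT.norm_sq_eq_norm_apply_sq_add x]
  nlinarith [pow_le_pow_left₀ (norm_nonneg _) hux 2]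

theorem mul_norm_sub_apply_sq_le (hT : T.IsSymmetricProjection) {x y : E} (hx : ‖x‖ = 1)
    (hy : T y = y) {s : ℝ} (hs : 0 ≤ s) (hsy : s ≤ ‖y‖) :
    s * ‖x - T x‖ ^ 2 ≤ 2 * (‖y‖ - RCLike.re (inner 𝕜 x y)) := by
  have hbessel := hT.norm_inner_sq_add_sq_mul_norm_sub_sq_le hy x
  rw [hx, norm_inner_symm] at hbessel
  calc s * ‖x - T x‖ ^ 2 ≤ 2 * (‖y‖ - ‖(inner 𝕜 x y : 𝕜)‖) :=
        mul_le_two_mul_sub_of_sq_mul_le hs hsy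
          (norm_inner_le_of_norm_eq_one hx y) (by linarith)
    _ ≤ 2 * (‖y‖ - RCLike.re (inner 𝕜 x y)) := by gcongr; exact RCLike.re_le_norm _

theorem mul_norm_sub_apply_sq_le_mul (hT : T.IsSymmetricProjection) {x y : E} (hx : ‖x‖ = 1)
    (hTx : T x = x) {s F : ℝ} (hs : 0 ≤ s) (hsy : s ≤ ‖y‖) (hF : ‖y‖ ^ 2 ≤ F) :
    s * ‖y - T y‖ ^ 2 ≤ 2 * (‖y‖ - RCLike.re (inner 𝕜 x y)) * F := by
  have hbessel := hT.norm_inner_sq_add_sq_mul_norm_sub_sq_le hTx y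
  rw [hx] at hbessel
  calc s * ‖y - T y‖ ^ 2 ≤ 2 * (‖y‖ - ‖(inner 𝕜 x y : 𝕜)‖) * F :=
        mul_le_two_mul_sub_mul_of_le_sq_sub_sq hs hsy
          (norm_inner_le_of_norm_eq_one hx y) (by linarith) hF
    _ ≤ 2 * (‖y‖ - RCLike.re (inner 𝕜 x y)) * F := by
        gcongr
        · exact (sq_nonneg _).trans hF
        · exact RCLike.re_le_norm _

end LinearMap.IsSymmetricProjection

end InnerProductSpace

namespace Matrix

section RCLike

variable {𝕜 α β : Type*} [RCLike 𝕜] [Fintype α]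

theorem norm_apply_le_one_of_conjTranspose_mul_self_eq_one [DecidableEq β] {Q : Matrix α β 𝕜}
    (hQ : Qᴴ * Q = 1) (a : α) (b : β) : ‖Q a b‖ ≤ 1 := by
  have hcol : ‖WithLp.toLp 2 (Qᵀ b)‖ = 1 := by
    rw [norm_eq_sqrt_re_inner (𝕜 := 𝕜), inner_matrix_col_col, hQ, one_apply_eq, RCLike.one_re,
      Real.sqrt_one]
  simpa [hcol] using PiLp.norm_apply_le (WithLp.toLp 2 (Qᵀ b)) a

variable [Fintype β]

theorem mul_eq_self_of_range_mulVecLin_le [DecidableEq β] {Q : Matrix α α 𝕜} {H : Matrix α β 𝕜}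
    (hidem : Q * Q = Q) (hrange : LinearMap.range H.mulVecLin ≤ LinearMap.range Q.mulVecLin) :
    Q * H = H := by
  refine ext_of_mulVec_single fun j => ?_
  obtain ⟨z, hz⟩ := hrange ⟨Pi.single j 1, rfl⟩
  rw [mulVecLin_apply, mulVecLin_apply] at hz
  rw [← mulVec_mulVec, ← hz, mulVec_mulVec, hidem]

variable [DecidableEq α] [DecidableEq β]

theorem inner_toEuclideanLin_left (A : Matrix α β 𝕜) (x : EuclideanSpace 𝕜 β)
    (y : EuclideanSpace 𝕜 α) :
    inner 𝕜 (A.toEuclideanLin x) y = inner 𝕜 x (Aᴴ.toEuclideanLin y) := by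
  rw [toEuclideanLin_conjTranspose_eq_adjoint, LinearMap.adjoint_inner_right]

theorem norm_toEuclideanLin_of_conjTranspose_mul_self_eq_one {P : Matrix α β 𝕜}
    (hP : Pᴴ * P = 1) (x : EuclideanSpace 𝕜 β) : ‖P.toEuclideanLin x‖ = ‖x‖ := by
  have h : inner 𝕜 (P.toEuclideanLin x) (P.toEuclideanLin x) = inner 𝕜 x x := by
    rw [inner_toEuclideanLin_left, ← LinearMap.comp_apply, ← toLpLin_mul_same, hP, toLpLin_one,
      LinearMap.id_apply]
  rw [norm_eq_sqrt_re_inner (𝕜 := 𝕜), h, ← norm_eq_sqrt_re_inner]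

theorem norm_toEuclideanLin_orthonormalBasis {P : Matrix α β 𝕜} (hP : Pᴴ * P = 1)
    (b : OrthonormalBasis β 𝕜 (EuclideanSpace 𝕜 β)) (i : β) : ‖P.toEuclideanLin (b i)‖ = 1 := by
  rw [norm_toEuclideanLin_of_conjTranspose_mul_self_eq_one hP, b.orthonormal.1 i]

theorem isSymmetricProjection_toEuclideanLin {Q : Matrix α α 𝕜} (hidem : Q * Q = Q)
    (hherm : Qᴴ = Q) : Q.toEuclideanLin.IsSymmetricProjection where
  isIdempotentElem := by
    rw [IsIdempotentElem, Module.End.mul_eq_comp, ← toLpLin_mul_same, hidem]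
  isSymmetric := isSymmetric_toEuclideanLin_iff.2 hherm

theorem isSymmetricProjection_toEuclideanLin_mul_conjTranspose {P : Matrix α β 𝕜}
    (hP : Pᴴ * P = 1) : (P * Pᴴ).toEuclideanLin.IsSymmetricProjection :=
  isSymmetricProjection_toEuclideanLin (by rw [Matrix.mul_assoc, ← Matrix.mul_assoc Pᴴ, hP,
    Matrix.one_mul]) (by rw [conjTranspose_mul, conjTranspose_conjTranspose])

theorem trace_eq_sum_inner_toEuclideanLin (M : Matrix β β 𝕜)
    (b : OrthonormalBasis β 𝕜 (EuclideanSpace 𝕜 β)) :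
    M.trace = ∑ i, inner 𝕜 (b i) (M.toEuclideanLin (b i)) := by
  rw [← LinearMap.trace_eq_sum_inner, toEuclideanLin_eq_toLin_orthonormal, trace_toLin_eq]

end RCLike

end Matrix

section Frobenius

variable {α β : Type*} [Fintype α] [Fintype β]

theorem frobNorm_sq_eq_re_trace (X : Matrix α β ℂ) : frobNorm X ^ 2 = (Xᴴ * X).trace.re := by
  have h : 0 ≤ ∑ a, ∑ b, Complex.normSq (X a b) :=
    Finset.sum_nonneg fun _ _ => Finset.sum_nonneg fun _ _ => Complex.normSq_nonneg _
  rw [frobNorm, Real.sq_sqrt h, trace, Complex.re_sum, Finset.sum_comm]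
  refine Finset.sum_congr rfl fun a _ => ?_
  simp [mul_apply, Complex.re_sum, Complex.normSq_apply, mul_comm]

variable [DecidableEq α] [DecidableEq β]

theorem frobNorm_sq_eq_sum_norm_sq (X : Matrix α β ℂ)
    (b : OrthonormalBasis β ℂ (EuclideanSpace ℂ β)) :
    frobNorm X ^ 2 = ∑ i, ‖X.toEuclideanLin (b i)‖ ^ 2 := by
  rw [frobNorm_sq_eq_re_trace, trace_eq_sum_inner_toEuclideanLin _ b, Complex.re_sum]
  refine Finset.sum_congr rfl fun i _ => ?_
  rw [toLpLin_mul_same, LinearMap.comp_apply, ← inner_toEuclideanLin_left,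
    inner_self_eq_norm_sq_to_K]
  norm_cast

theorem sq_norm_toEuclideanLin_le_frobNorm_sq (X : Matrix α β ℂ)
    (b : OrthonormalBasis β ℂ (EuclideanSpace ℂ β)) (i : β) :
    ‖X.toEuclideanLin (b i)‖ ^ 2 ≤ frobNorm X ^ 2 := by
  rw [frobNorm_sq_eq_sum_norm_sq X b]
  exact Finset.single_le_sum (f := fun i => ‖X.toEuclideanLin (b i)‖ ^ 2)
    (fun _ _ => sq_nonneg _) (Finset.mem_univ i)

end Frobenius

section SingularValues

variable {α β : Type*} [Fintype α] [Fintype β] [DecidableEq β]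

theorem sigmaMin_nonneg (H : Matrix α β ℂ) : 0 ≤ sigmaMin H :=
  Real.sInf_nonneg <| Set.forall_mem_range.2 fun _ => Real.sqrt_nonneg _

variable [DecidableEq α]

noncomputable def rightSingularBasis (H : Matrix α β ℂ) :
    OrthonormalBasis β ℂ (EuclideanSpace ℂ β) :=
  (posSemidef_conjTranspose_mul_self H).1.eigenvectorBasis

theorem norm_toEuclideanLin_rightSingularBasis (H : Matrix α β ℂ) (i : β) :
    ‖H.toEuclideanLin (rightSingularBasis H i)‖ =
      √((posSemidef_conjTranspose_mul_self H).1.eigenvalues i) := by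
  set hHH := (posSemidef_conjTranspose_mul_self H).1
  set v := rightSingularBasis H i
  have hv : (Hᴴ * H).toEuclideanLin v = hHH.eigenvalues i • v := by
    rw [toLpLin_apply]
    exact congrArg (WithLp.toLp 2) (hHH.mulVec_eigenvectorBasis i)
  have hsq : ‖H.toEuclideanLin v‖ ^ 2 = hHH.eigenvalues i := by
    rw [← inner_self_eq_norm_sq (𝕜 := ℂ), inner_toEuclideanLin_left, ← LinearMap.comp_apply,
      ← toLpLin_mul_same, hv, inner_smul_right_eq_smul,
      inner_self_eq_one_of_norm_eq_one ((rightSingularBasis H).orthonormal.1 i)]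
    simp
  rw [← hsq, Real.sqrt_sq (norm_nonneg _)]

theorem traceNorm_eq_sum_norm_toEuclideanLin (H : Matrix α β ℂ) :
    traceNorm H = ∑ i, ‖H.toEuclideanLin (rightSingularBasis H i)‖ := by
  simp only [traceNorm, norm_toEuclideanLin_rightSingularBasis]

theorem sigmaMin_le_norm_toEuclideanLin (H : Matrix α β ℂ) (i : β) :
    sigmaMin H ≤ ‖H.toEuclideanLin (rightSingularBasis H i)‖ := by
  rw [norm_toEuclideanLin_rightSingularBasis]
  exact csInf_le (Set.finite_range _).bddBelow ⟨i, rfl⟩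

theorem traceNorm_sub_re_trace_eq_sum (H P : Matrix α β ℂ) :
    traceNorm H - (Pᴴ * H).trace.re = ∑ i, (‖H.toEuclideanLin (rightSingularBasis H i)‖ -
      (inner ℂ (P.toEuclideanLin (rightSingularBasis H i))
        (H.toEuclideanLin (rightSingularBasis H i))).re) := by
  rw [traceNorm_eq_sum_norm_toEuclideanLin,
    trace_eq_sum_inner_toEuclideanLin _ (rightSingularBasis H), Complex.re_sum,
    ← Finset.sum_sub_distrib]
  simp only [toLpLin_mul_same, LinearMap.comp_apply, inner_toEuclideanLin_left]

theorem re_trace_le_traceNorm (H : Matrix α β ℂ) {P : Matrix α β ℂ} (hP : Pᴴ * P = 1) :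
    (Pᴴ * H).trace.re ≤ traceNorm H := by
  rw [← sub_nonneg, traceNorm_sub_re_trace_eq_sum]
  refine Finset.sum_nonneg fun i _ => sub_nonneg.2 <| (Complex.re_le_norm _).trans <|
    norm_inner_le_of_norm_eq_one (norm_toEuclideanLin_orthonormalBasis hP _ i) _

end SingularValues

section ResidualBounds

variable {α β : Type*} [Fintype α] [Fintype β] [DecidableEq α] [DecidableEq β]
  (H : Matrix α β ℂ) {P : Matrix α β ℂ}

theorem sigmaMin_mul_frobNorm_sub_mul_sq_le (hP : Pᴴ * P = 1) {Q : Matrix α α ℂ}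
    (hidem : Q * Q = Q) (hherm : Qᴴ = Q) (hQH : Q * H = H) :
    sigmaMin H * frobNorm (P - Q * P) ^ 2 ≤ 2 * (traceNorm H - (Pᴴ * H).trace.re) := by
  rw [frobNorm_sq_eq_sum_norm_sq _ (rightSingularBasis H), traceNorm_sub_re_trace_eq_sum,
    Finset.mul_sum, Finset.mul_sum]
  refine Finset.sum_le_sum fun i _ => ?_
  have hQ : Q.toEuclideanLin (H.toEuclideanLin (rightSingularBasis H i)) =
      H.toEuclideanLin (rightSingularBasis H i) := by
    rw [← LinearMap.comp_apply, ← toLpLin_mul_same, hQH]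
  rw [map_sub, LinearMap.sub_apply, toLpLin_mul_same, LinearMap.comp_apply]
  exact (isSymmetricProjection_toEuclideanLin hidem hherm).mul_norm_sub_apply_sq_le
      (norm_toEuclideanLin_orthonormalBasis hP _ i) hQ
      (sigmaMin_nonneg H) (sigmaMin_le_norm_toEuclideanLin H i)

theorem sigmaMin_mul_frobNorm_sub_mul_sq_div_le (hP : Pᴴ * P = 1) :
    sigmaMin H * (frobNorm (H - P * (Pᴴ * H)) ^ 2 / frobNorm H ^ 2) ≤
      2 * (traceNorm H - (Pᴴ * H).trace.re) := by
  have hgap := sub_nonneg.2 (re_trace_le_traceNorm H hP)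
  rcases (sq_nonneg (frobNorm H)).eq_or_lt with hF | hF
  · rw [← hF, div_zero, mul_zero]
    positivity
  rw [← mul_div_assoc, div_le_iff₀ hF, frobNorm_sq_eq_sum_norm_sq _ (rightSingularBasis H),
    traceNorm_sub_re_trace_eq_sum, Finset.mul_sum, Finset.mul_sum, Finset.sum_mul]
  refine Finset.sum_le_sum fun i _ => ?_
  have hPP : (P * Pᴴ).toEuclideanLin (P.toEuclideanLin (rightSingularBasis H i)) =
      P.toEuclideanLin (rightSingularBasis H i) := by
    rw [← LinearMap.comp_apply, ← toLpLin_mul_same, Matrix.mul_assoc, hP, Matrix.mul_one]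
  rw [← Matrix.mul_assoc, map_sub, LinearMap.sub_apply, toLpLin_mul_same _ (P * Pᴴ),
    LinearMap.comp_apply]
  exact (isSymmetricProjection_toEuclideanLin_mul_conjTranspose hP).mul_norm_sub_apply_sq_le_mul
      (norm_toEuclideanLin_orthonormalBasis hP _ i) hPP
      (sigmaMin_nonneg H) (sigmaMin_le_norm_toEuclideanLin H i)
      (sq_norm_toEuclideanLin_le_frobNorm_sq H (rightSingularBasis H) i)

end ResidualBounds

section Objective

variable {m t : ℕ} {n : Fin m → ℕ} {κ : Fin m → Fin t → ℕ} (B : (∀ ℓ, Fin (n ℓ)) → ℂ)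
  {Q : ∀ ℓ, Matrix (Fin (n ℓ)) ((s : Fin t) × Fin (κ ℓ s)) ℂ}

theorem norm_multiProd_le (hQ : ∀ ℓ, (Q ℓ)ᴴ * Q ℓ = 1) (i : ∀ ℓ, (s : Fin t) × Fin (κ ℓ s)) :
    ‖multiProd B Q i‖ ≤ ∑ j, ‖B j‖ := by
  refine (norm_sum_le _ _).trans <| Finset.sum_le_sum fun j _ => ?_
  rw [norm_mul]
  refine mul_le_of_le_one_left (norm_nonneg _) ?_
  rw [norm_prod]
  exact Finset.prod_le_one (fun _ _ => norm_nonneg _) fun ℓ _ => by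
    simpa using Matrix.norm_apply_le_one_of_conjTranspose_mul_self_eq_one (hQ ℓ) (j ℓ) (i ℓ)

theorem fObj_le (hQ : ∀ ℓ, (Q ℓ)ᴴ * Q ℓ = 1) :
    fObj B Q ≤ Fintype.card (∀ ℓ, (s : Fin t) × Fin (κ ℓ s)) * (∑ j, ‖B j‖) ^ 2 := by
  rw [fObj, ← nsmul_eq_mul, ← Finset.card_univ, ← Finset.sum_const]
  refine Finset.sum_le_sum fun i _ => ?_
  split_ifs
  · rw [← Complex.sq_norm]
    exact pow_le_pow_left₀ (norm_nonneg _) (norm_multiProd_le B hQ i) 2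
  · positivity

end Objective

theorem summable_of_mul_le_sub_succ {a g : ℕ → ℝ} {c K : ℝ} (hc : 0 < c) (hg : ∀ j, 0 ≤ g j)
    (ha : ∀ j, a j ≤ K) (hstep : ∀ j, c * g j ≤ a (j + 1) - a j) : Summable g := by
  refine summable_of_sum_range_le (c := (K - a 0) / c) hg fun J => ?_
  rw [le_div_iff₀ hc, Finset.sum_mul]
  calc ∑ j ∈ Finset.range J, g j * c ≤ ∑ j ∈ Finset.range J, (a (j + 1) - a j) :=
        Finset.sum_le_sum fun j _ => by linarith [hstep j]
    _ = a J - a 0 := Finset.sum_range_sub a J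
    _ ≤ K - a 0 := by linarith [ha J]

theorem stmt_19_general (m t : ℕ) (hm : 1 ≤ m)
    (n : Fin m → ℕ)
    (κ : Fin m → Fin t → ℕ)
    (B : (∀ ℓ, Fin (n ℓ)) → ℂ)
    (P : ℕ → ∀ ℓ, Matrix (Fin (n ℓ)) ((s : Fin t) × Fin (κ ℓ s)) ℂ)
    (horth : ∀ j ℓ, (P j ℓ)ᴴ * P j ℓ = 1)
    (c : ℝ) (hc : 0 < c)
    (hsa : ∀ j : ℕ,
      c * (Finset.univ.sup' ⟨⟨0, hm⟩, Finset.mem_univ _⟩ fun ℓ : Fin m =>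
          traceNorm (scrH B (P j) ℓ) - (Matrix.trace ((P j ℓ)ᴴ * scrH B (P j) ℓ)).re)
        ≤ fObj B (P (j + 1)) - fObj B (P j))
    :
    ∀ ℓ : Fin m,
      (∀ Proj : ℕ → Matrix (Fin (n ℓ)) (Fin (n ℓ)) ℂ,
        (∀ j, Proj j * Proj j = Proj j ∧ (Proj j)ᴴ = Proj j ∧
          LinearMap.range (Matrix.mulVecLin (Proj j)) =
            Submodule.span ℂ (Set.range (scrH B (P j) ℓ)ᵀ)) →
        Summable (fun j : ℕ => sigmaMin (scrH B (P j) ℓ) *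
          (frobNorm (P j ℓ - Proj j * P j ℓ)) ^ 2)) ∧
      Summable (fun j : ℕ => sigmaMin (scrH B (P j) ℓ) *
        ((frobNorm (scrH B (P j) ℓ - P j ℓ * ((P j ℓ)ᴴ * scrH B (P j) ℓ))) ^ 2 /
          (frobNorm (scrH B (P j) ℓ)) ^ 2)) := by
  intro ℓ
  have hgap : Summable fun j =>
      traceNorm (scrH B (P j) ℓ) - (Matrix.trace ((P j ℓ)ᴴ * scrH B (P j) ℓ)).re :=
    summable_of_mul_le_sub_succ hc (fun j => sub_nonneg.2 (re_trace_le_traceNorm _ (horth j ℓ)))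
      (fun j => fObj_le B (horth j)) fun j =>
        (mul_le_mul_of_nonneg_left (Finset.le_sup' _ (Finset.mem_univ ℓ)) hc.le).trans (hsa j)
  refine ⟨fun Proj hProj => ?_, ?_⟩
  · refine (hgap.mul_left 2).of_nonneg_of_le
      (fun j => mul_nonneg (sigmaMin_nonneg _) (sq_nonneg _)) fun j => ?_
    obtain ⟨hidem, hherm, hrange⟩ := hProj j
    exact sigmaMin_mul_frobNorm_sub_mul_sq_le _ (horth j ℓ) hidem hherm <|
      mul_eq_self_of_range_mulVecLin_le hidem <|
        (range_mulVecLin _).trans_le hrange.ge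
  · refine (hgap.mul_left 2).of_nonneg_of_le
      (fun j => mul_nonneg (sigmaMin_nonneg _) (by positivity)) fun j =>
      sigmaMin_mul_frobNorm_sub_mul_sq_div_le _ (horth j ℓ)

/-- Theorem 4.2(c): under the sufficient-ascent condition, for every mode `ℓ`
the series `Σ_j σ_min(ℋ_ℓ^{(j)})·‖P_ℓ^{(j)} − Π_ℓ^{(j)} P_ℓ^{(j)}‖_F²` (where `Π_ℓ^{(j)}` is
the orthogonal projection onto the column space of `ℋ_ℓ^{(j)}`, characterized by being an
idempotent Hermitian matrix whose range is the span of the columns of `ℋ_ℓ^{(j)}`) and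
`Σ_j σ_min(ℋ_ℓ^{(j)})·‖ℋ_ℓ^{(j)} − P_ℓ^{(j)}((P_ℓ^{(j)})ᴴ ℋ_ℓ^{(j)})‖_F²/‖ℋ_ℓ^{(j)}‖_F²`
both converge. -/
theorem stmt_19 (m t : ℕ) (hm : 1 ≤ m) (ht : 1 ≤ t)
    (n : Fin m → ℕ) (hn : ∀ ℓ, 1 ≤ n ℓ)
    (κ : Fin m → Fin t → ℕ) (hκ : ∀ ℓ s, 1 ≤ κ ℓ s)
    (hkn : ∀ ℓ, (∑ s, κ ℓ s) ≤ n ℓ)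
    (B : (∀ ℓ, Fin (n ℓ)) → ℂ)
    (P : ℕ → ∀ ℓ, Matrix (Fin (n ℓ)) ((s : Fin t) × Fin (κ ℓ s)) ℂ)
    (horth : ∀ j ℓ, (P j ℓ)ᴴ * P j ℓ = 1)
    (c : ℝ) (hc : 0 < c)
    (hsa : ∀ j : ℕ,
      c * (Finset.univ.sup' ⟨⟨0, hm⟩, Finset.mem_univ _⟩ fun ℓ : Fin m =>
          traceNorm (scrH B (P j) ℓ) - (Matrix.trace ((P j ℓ)ᴴ * scrH B (P j) ℓ)).re)
        ≤ fObj B (P (j + 1)) - fObj B (P j))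
    :
    ∀ ℓ : Fin m,
      (∀ Proj : ℕ → Matrix (Fin (n ℓ)) (Fin (n ℓ)) ℂ,
        (∀ j, Proj j * Proj j = Proj j ∧ (Proj j)ᴴ = Proj j ∧
          LinearMap.range (Matrix.mulVecLin (Proj j)) =
            Submodule.span ℂ (Set.range (scrH B (P j) ℓ)ᵀ)) →
        Summable (fun j : ℕ => sigmaMin (scrH B (P j) ℓ) *
          (frobNorm (P j ℓ - Proj j * P j ℓ)) ^ 2)) ∧
      Summable (fun j : ℕ => sigmaMin (scrH B (P j) ℓ) *
        ((frobNorm (scrH B (P j) ℓ - P j ℓ * ((P j ℓ)ᴴ * scrH B (P j) ℓ))) ^ 2 /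
          (frobNorm (scrH B (P j) ℓ)) ^ 2)) :=
  stmt_19_general m t hm n κ B P horth c hc hsa
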